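/- Let D be a p×p diagonal real matrix and Σ a p×p positive semidefinite matrix with rank(Σ) ≥ p − 1, and set Γ = DΣ. If Γ is neither positive semidefinite nor negative semidefinite (as a quadratic form, i.e., z'Γz takes both signs), then for every δ > 0 there exist a vector z ∈ ℝ^p and diagonal p×p matrices H₁, H₂ such that ‖z‖ < δ, ‖D − H₁‖ < δ, ‖D − H₂‖ < δ, z'(H₁Σ)z > 0, and z'(H₂Σ)z < 0. -/

import Mathlib

/-!
The quadratic form of the indefinite matrix `Γ = DΣ` vanishes on each segment joining a vector
where it is negative to `±` a vector where it is positive, and these two zeros are linearly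
independent. The kernel of `Σ` is at most a line, so one of them, `z₀`, has `z₀'Σz₀ > 0`.
Replacing `D` by `D ± εI` turns the form at `z₀` into `± ε z₀'Σz₀`, and shrinking `z₀` keeps
these signs.
-/

open Matrix

attribute [local instance] Matrix.frobeniusNormedAddCommGroup
attribute [local instance] Matrix.frobeniusNormedSpace

open Module Set Submodule

namespace QuadraticMap

variable {V : Type*} [AddCommGroup V] [Module ℝ V] (Q : QuadraticMap ℝ V ℝ) {x y : V}

theorem apply_lineMap (x y : V) (t : ℝ) :
    Q (AffineMap.lineMap x y t) =
      (1 - t) ^ 2 * Q x + (1 - t) * t * polar Q x y + t ^ 2 * Q y := by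
  rw [AffineMap.lineMap_apply_module, QuadraticMap.map_add (Q : V → ℝ), Q.map_smul, Q.map_smul,
    polar_smul_left, polar_smul_right]
  simp only [smul_eq_mul]
  ring

theorem exists_isotropic_mem_openSegment (hx : Q x < 0) (hy : 0 < Q y) :
    ∃ w ∈ openSegment ℝ x y, Q w = 0 := by
  have hcont : Continuous fun t : ℝ => Q (AffineMap.lineMap x y t) := by
    simp_rw [apply_lineMap]
    fun_prop
  obtain ⟨t, ht, hzero⟩ := intermediate_value_Ioo zero_le_one hcont.continuousOn
    (show (0 : ℝ) ∈ Ioo (Q (AffineMap.lineMap x y 0)) (Q (AffineMap.lineMap x y 1)) by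
      simpa using ⟨hx, hy⟩)
  exact ⟨_, openSegment_eq_image_lineMap ℝ x y ▸ mem_image_of_mem _ ht, hzero⟩

theorem linearIndependent_pair_of_neg_of_pos (hx : Q x < 0) (hy : 0 < Q y) :
    LinearIndependent ℝ ![x, y] := by
  refine LinearIndependent.pair_iff.2 fun s t hst => ?_
  have h : (s * s) * Q x = (t * t) * Q y := by
    rw [← smul_eq_mul, ← Q.map_smul, eq_neg_of_add_eq_zero_left hst, Q.map_neg, Q.map_smul,
      smul_eq_mul]
  have hs : s * s = 0 := by nlinarith [mul_self_nonneg s, mul_self_nonneg t]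
  have ht : t * t = 0 := by nlinarith [mul_self_nonneg s, mul_self_nonneg t]
  exact ⟨mul_self_eq_zero.1 hs, mul_self_eq_zero.1 ht⟩

theorem exists_linearIndependent_isotropic_pair (hx : Q x < 0) (hy : 0 < Q y) :
    ∃ u v : V, LinearIndependent ℝ ![u, v] ∧ Q u = 0 ∧ Q v = 0 := by
  obtain ⟨u, ⟨a, b, ha, hb, -, rfl⟩, hu⟩ := Q.exists_isotropic_mem_openSegment hx hy
  obtain ⟨v, ⟨c, d, hc, hd, -, rfl⟩, hv⟩ :=
    Q.exists_isotropic_mem_openSegment (y := -y) hx (by rwa [Q.map_neg])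
  refine ⟨_, _, LinearIndependent.pair_iff.2 fun s t hst => ?_, hu, hv⟩
  obtain ⟨hx', hy'⟩ := LinearIndependent.pair_iff.1 (Q.linearIndependent_pair_of_neg_of_pos hx hy)
    (s * a + t * c) (s * b - t * d) (by rw [← hst]; module)
  constructor <;> nlinarith [mul_pos ha hd, mul_pos hb hc]

end QuadraticMap

theorem LinearIndependent.notMem_or_notMem_of_finrank_le_one {K V : Type*} [DivisionRing K]
    [AddCommGroup V] [Module K V] {u v : V} (huv : LinearIndependent K ![u, v])
    {W : Submodule K V} [FiniteDimensional K W] (hW : finrank K W ≤ 1) : u ∉ W ∨ v ∉ W := by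
  by_contra! h
  have hspan : span K (range ![u, v]) ≤ W := by
    rw [span_le, range_subset_iff, Fin.forall_fin_two]
    exact h
  have := Submodule.finrank_mono hspan
  rw [finrank_span_eq_card huv, Fintype.card_fin] at this
  omega

theorem Matrix.finrank_ker_mulVecLin_le_one {m n K : Type*} [Fintype n] [Field K]
    {S : Matrix m n K} (hS : Fintype.card n - 1 ≤ S.rank) :
    finrank K (LinearMap.ker S.mulVecLin) ≤ 1 := by
  have h := LinearMap.finrank_range_add_finrank_ker S.mulVecLin
  rw [finrank_fintype_fun_eq_card] at h
  change S.rank + _ = _ at h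
  omega

open scoped ComplexOrder in
theorem Matrix.PosSemidef.dotProduct_mulVec_pos_of_mulVec_ne_zero {n 𝕜 : Type*} [Fintype n]
    [RCLike 𝕜] {A : Matrix n n 𝕜} (hA : A.PosSemidef) {x : n → 𝕜} (hx : A *ᵥ x ≠ 0) :
    0 < star x ⬝ᵥ A *ᵥ x :=
  (hA.dotProduct_mulVec_nonneg x).lt_of_ne' (mt (hA.dotProduct_mulVec_zero_iff x).1 hx)

theorem Matrix.exists_dotProduct_mulVec_eq_zero_and_pos {n : Type*} [Fintype n] [DecidableEq n]
    (M S : Matrix n n ℝ) (hS : S.PosSemidef) (hrank : Fintype.card n - 1 ≤ S.rank)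
    {x y : n → ℝ} (hx : x ⬝ᵥ M *ᵥ x < 0) (hy : 0 < y ⬝ᵥ M *ᵥ y) :
    ∃ z, z ⬝ᵥ M *ᵥ z = 0 ∧ 0 < z ⬝ᵥ S *ᵥ z := by
  have hQ : ∀ z, M.toQuadraticForm' z = z ⬝ᵥ M *ᵥ z := fun z => toLinearMap₂'_apply' M z z
  obtain ⟨u, v, huv, hu, hv⟩ :=
    M.toQuadraticForm'.exists_linearIndependent_isotropic_pair (by rwa [hQ]) (by rwa [hQ])
  have hpos : ∀ z ∉ LinearMap.ker S.mulVecLin, 0 < z ⬝ᵥ S *ᵥ z := fun z hz =>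
    by simpa using hS.dotProduct_mulVec_pos_of_mulVec_ne_zero hz
  rcases huv.notMem_or_notMem_of_finrank_le_one (finrank_ker_mulVecLin_le_one hrank) with h | h
  · exact ⟨u, hQ u ▸ hu, hpos u h⟩
  · exact ⟨v, hQ v ▸ hv, hpos v h⟩

theorem Matrix.smul_dotProduct_mulVec_smul {n R : Type*} [Fintype n] [CommRing R]
    (M : Matrix n n R) (c : R) (z : n → R) :
    (c • z) ⬝ᵥ M *ᵥ (c • z) = c ^ 2 * (z ⬝ᵥ M *ᵥ z) := by
  rw [mulVec_smul, dotProduct_smul, smul_dotProduct, smul_eq_mul, smul_eq_mul]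
  ring

theorem Matrix.dotProduct_add_smul_one_mul_mulVec {n R : Type*} [Fintype n] [DecidableEq n]
    [CommRing R] (D S : Matrix n n R) (a : R) (z : n → R) :
    z ⬝ᵥ ((D + a • 1) * S) *ᵥ z = z ⬝ᵥ (D * S) *ᵥ z + a * (z ⬝ᵥ S *ᵥ z) := by
  rw [add_mul, smul_mul, one_mul, add_mulVec, smul_mulVec, dotProduct_add, dotProduct_smul,
    smul_eq_mul]

theorem exists_pos_norm_smul_lt {E : Type*} [SeminormedAddCommGroup E] [NormedSpace ℝ E]
    (v : E) {δ : ℝ} (hδ : 0 < δ) : ∃ c : ℝ, 0 < c ∧ ‖c • v‖ < δ := by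
  refine ⟨δ / (‖v‖ + 1), by positivity, ?_⟩
  rw [norm_smul, Real.norm_of_nonneg (by positivity), div_mul_eq_mul_div,
    div_lt_iff₀ (by positivity)]
  nlinarith [norm_nonneg v]

theorem diagonal_perturbation_lemma (p : ℕ) (D S : Matrix (Fin p) (Fin p) ℝ)
    (hD : D.IsDiag) (hpsd : S.PosSemidef) (hrank : p - 1 ≤ S.rank)
    (hnotpsd : ¬ ∀ z : Fin p → ℝ, 0 ≤ z ⬝ᵥ (D * S) *ᵥ z)
    (hnotnsd : ¬ ∀ z : Fin p → ℝ, z ⬝ᵥ (D * S) *ᵥ z ≤ 0) :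
    ∀ δ : ℝ, 0 < δ →
      ∃ (z : Fin p → ℝ) (H₁ H₂ : Matrix (Fin p) (Fin p) ℝ),
        H₁.IsDiag ∧ H₂.IsDiag ∧ ‖z‖ < δ ∧ ‖D - H₁‖ < δ ∧ ‖D - H₂‖ < δ ∧
        0 < z ⬝ᵥ (H₁ * S) *ᵥ z ∧ z ⬝ᵥ (H₂ * S) *ᵥ z < 0 := by
  push Not at hnotpsd hnotnsd
  obtain ⟨x, hx⟩ := hnotpsd
  obtain ⟨y, hy⟩ := hnotnsd
  obtain ⟨z₀, hz₀, hSz₀⟩ := exists_dotProduct_mulVec_eq_zero_and_pos (D * S) S hpsd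
    (by rwa [Fintype.card_fin]) hx hy
  intro δ hδ
  obtain ⟨c, hc, hcz₀⟩ := exists_pos_norm_smul_lt z₀ hδ
  obtain ⟨ε, hε, hε1⟩ := exists_pos_norm_smul_lt (1 : Matrix (Fin p) (Fin p) ℝ) hδ
  have hform : ∀ a : ℝ, (c • z₀) ⬝ᵥ ((D + a • 1) * S) *ᵥ (c • z₀) =
      c ^ 2 * a * (z₀ ⬝ᵥ S *ᵥ z₀) := fun a => by
    rw [smul_dotProduct_mulVec_smul, dotProduct_add_smul_one_mul_mulVec, hz₀]
    ring
  refine ⟨c • z₀, D + ε • 1, D + (-ε) • 1, hD.add (isDiag_one.smul ε),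
    hD.add (isDiag_one.smul _), hcz₀, ?_, ?_, ?_, ?_⟩
  · rwa [sub_add_cancel_left, norm_neg]
  · rwa [sub_add_cancel_left, neg_smul, neg_neg]
  · rw [hform]
    positivity
  · rw [hform, mul_neg, neg_mul]
    exact neg_neg_of_pos (by positivity)
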